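/- Let f be an even integrable symbol on the unit circle with Fourier coefficients f_j. Then det(f_{j−k} + f_{j+k+1})_{j,k=0}^{n−1} = (2^{n²−n}/π^n) D_n^H(f(e^{iθ(x)}) √((1+x)/(1−x))), with x = cos θ and D_n^H the Hankel determinant on [−1,1]. -/

import Mathlib

/-!
Write `V_n` for the Chebyshev polynomials of the third kind, `cos (θ/2) V_n(cos θ) = cos((n+½)θ)`.
For an even `2π`-periodic symbol the Fourier coefficients are cosine integrals over `[0, π]`, and
`cos((j-k)θ) + cos((j+k+1)θ) = 2 cos((j+½)θ) cos((k+½)θ) = V_j(cos θ) V_k(cos θ) (1 + cos θ)`.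
Under `x = cos θ` the factor `(1 + cos θ) dθ` becomes `√((1+x)/(1-x)) dx`, so the Toeplitz+Hankel
matrix is `1/π` times the Gram matrix of `V_0, …, V_{n-1}` for the weight `w`, that is
`(1/π) C H Cᵀ` with `H` the Hankel moment matrix of `w` and `C` the coefficient matrix of the `V_j`.
`C` is lower triangular with diagonal `2^j`, whence the factor `2^{n²-n}/πⁿ`.
-/

open MeasureTheory

open scoped Real

/-- Fourier coefficient of a symbol `g(θ)` (standing for `g(e^{iθ})`). -/
noncomputable def circleCoeff (g : ℝ → ℂ) (j : ℤ) : ℂ :=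
  (1 / (2 * (π : ℂ))) *
    ∫ θ in (0:ℝ)..(2 * π), g θ * Complex.exp (-(j * θ) * Complex.I)

/-- Hankel determinant of a weight `w` on `[-1,1]`. -/
noncomputable def hankelDet (w : ℝ → ℂ) (n : ℕ) : ℂ :=
  Matrix.det (Matrix.of fun j k : Fin n =>
    ∫ x in (-1:ℝ)..1, (x : ℂ)^((j : ℕ) + (k : ℕ)) * w x)

open Polynomial

open scoped Matrix

noncomputable def chebyshevV (R : Type*) [CommRing R] : ℕ → R[X]
  | 0 => 1
  | 1 => C 2 * X - 1
  | n + 2 => C 2 * X * chebyshevV R (n + 1) - chebyshevV R n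

section chebyshevV

variable (R : Type*) [CommRing R]

lemma chebyshevV_add_two (n : ℕ) :
    chebyshevV R (n + 2) = C 2 * X * chebyshevV R (n + 1) - chebyshevV R n := rfl

lemma chebyshevV_natDegree_le (n : ℕ) : (chebyshevV R n).natDegree ≤ n := by
  have hlin : (C (2 : R) * X).natDegree ≤ 1 := (natDegree_C_mul_le _ _).trans natDegree_X_le
  induction n using Nat.twoStepInduction with
  | zero => simp [chebyshevV]
  | one => exact (natDegree_sub_le _ _).trans (by simpa using hlin)
  | more n ih₀ ih₁ =>
    rw [chebyshevV_add_two]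
    refine (natDegree_sub_le _ _).trans (max_le ?_ (by omega))
    exact natDegree_mul_le.trans (by omega)

lemma chebyshevV_coeff_self (n : ℕ) : (chebyshevV R n).coeff n = 2 ^ n := by
  induction n using Nat.twoStepInduction with
  | zero => simp [chebyshevV]
  | one => simp [chebyshevV, coeff_one]
  | more n _ ih =>
    have hlow : (chebyshevV R n).coeff (n + 2) = 0 :=
      coeff_eq_zero_of_natDegree_lt ((chebyshevV_natDegree_le R n).trans_lt (by omega))
    rw [chebyshevV_add_two, coeff_sub, hlow, mul_assoc, coeff_C_mul, coeff_X_mul, ih]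
    ring

lemma det_chebyshevV_coeff (n : ℕ) :
    (Matrix.of fun i m : Fin n => (chebyshevV R i).coeff m).det
      = ∏ i : Fin n, (2 : R) ^ (i : ℕ) := by
  rw [Matrix.det_of_isLowerTriangular]
  · exact Finset.prod_congr rfl fun i _ => chebyshevV_coeff_self R i
  · exact fun i m him => coeff_eq_zero_of_natDegree_lt ((chebyshevV_natDegree_le R i).trans_lt him)

end chebyshevV

lemma chebyshevV_eval_cos (n : ℕ) (θ : ℂ) :
    Complex.cos (θ / 2) * (chebyshevV ℂ n).eval (Complex.cos θ)
      = Complex.cos ((n + 1 / 2) * θ) := by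
  have cos_add_add_cos_sub (a b : ℂ) :
      Complex.cos (a + b) + Complex.cos (a - b) = 2 * Complex.cos a * Complex.cos b := by
    rw [Complex.cos_add, Complex.cos_sub]; ring
  induction n using Nat.twoStepInduction with
  | zero => simp [chebyshevV]; ring_nf
  | one =>
    have h : Complex.cos ((1 + 1 / 2) * θ) + Complex.cos (θ / 2)
        = 2 * Complex.cos θ * Complex.cos (θ / 2) := by
      convert cos_add_add_cos_sub θ (θ / 2) using 3 <;> ring
    simp only [chebyshevV, eval_sub, eval_mul, eval_C, eval_X, eval_one]
    push_cast
    linear_combination -h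
  | more n ih₀ ih₁ =>
    have h : Complex.cos ((n + 2 + 1 / 2) * θ) + Complex.cos ((n + 1 / 2) * θ)
        = 2 * Complex.cos ((n + 1 + 1 / 2) * θ) * Complex.cos θ := by
      convert cos_add_add_cos_sub ((n + 1 + 1 / 2) * θ) θ using 3 <;> ring
    rw [chebyshevV_add_two]
    simp only [eval_sub, eval_mul, eval_C, eval_X]
    push_cast at ih₀ ih₁ ⊢
    linear_combination 2 * Complex.cos θ * ih₁ - ih₀ - h

lemma cos_sub_add_cos_add_eq_chebyshevV (j k : ℕ) (θ : ℂ) :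
    Complex.cos (((j : ℤ) - k : ℤ) * θ) + Complex.cos (((j : ℤ) + k + 1 : ℤ) * θ)
      = (chebyshevV ℂ j).eval (Complex.cos θ) * (chebyshevV ℂ k).eval (Complex.cos θ)
          * (1 + Complex.cos θ) := by
  have hsum : Complex.cos (((j : ℤ) - k : ℤ) * θ) + Complex.cos (((j : ℤ) + k + 1 : ℤ) * θ)
      = 2 * Complex.cos ((j + 1 / 2) * θ) * Complex.cos ((k + 1 / 2) * θ) := by
    rw [add_comm, Complex.cos_add_cos]; push_cast; ring_nf
  have hhalf : 1 + Complex.cos θ = 2 * Complex.cos (θ / 2) ^ 2 := by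
    rw [Complex.cos_sq, mul_div_cancel₀ θ two_ne_zero]; ring
  rw [hsum, hhalf, ← chebyshevV_eval_cos, ← chebyshevV_eval_cos]
  ring

lemma intervalIntegral.integral_zero_two_mul_eq_integral_add_comp_sub_left {E : Type*}
    [NormedAddCommGroup E] [NormedSpace ℝ E] {F : ℝ → E} {a : ℝ}
    (hF : IntervalIntegrable F volume 0 (2 * a)) :
    ∫ θ in (0 : ℝ)..(2 * a), F θ = ∫ θ in (0 : ℝ)..a, (F θ + F (2 * a - θ)) := by
  have ha : a ∈ Set.uIcc 0 (2 * a) := by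
    rcases le_total 0 a with h | h
    · exact Set.mem_uIcc.2 (Or.inl ⟨h, by linarith⟩)
    · exact Set.mem_uIcc.2 (Or.inr ⟨by linarith, h⟩)
  have hF₁ : IntervalIntegrable F volume 0 a :=
    hF.mono_set (Set.uIcc_subset_uIcc Set.left_mem_uIcc ha)
  have hF₂ : IntervalIntegrable F volume a (2 * a) :=
    hF.mono_set (Set.uIcc_subset_uIcc ha Set.right_mem_uIcc)
  have hreflect : ∫ θ in a..(2 * a), F θ = ∫ θ in (0 : ℝ)..a, F (2 * a - θ) := by
    rw [intervalIntegral.integral_comp_sub_left]; ring_nf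
  rw [← intervalIntegral.integral_add_adjacent_intervals hF₁ hF₂, hreflect,
    intervalIntegral.integral_add hF₁ ?_]
  simpa [show 2 * a - a = a by ring] using (hF₂.comp_sub_left (2 * a)).symm

lemma circleCoeff_eq_integral_cos {g : ℝ → ℂ} (hint : IntervalIntegrable g volume 0 (2 * π))
    (heven : ∀ θ, g (-θ) = g θ) (hper : Function.Periodic g (2 * π)) (m : ℤ) :
    circleCoeff g m = 1 / π * ∫ θ in (0 : ℝ)..π, g θ * Complex.cos (m * θ) := by
  have hcont : Continuous fun θ : ℝ => Complex.exp (-(m * θ) * Complex.I) := by fun_prop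
  have hreflect (θ : ℝ) : g (2 * π - θ) * Complex.exp (-(m * (2 * π - θ : ℝ)) * Complex.I)
      = g θ * Complex.exp ((m * θ) * Complex.I) := by
    have hg : g (2 * π - θ) = g θ := by rw [show 2 * π - θ = -θ + 2 * π by ring, hper, heven]
    have hexp : -(m * (2 * π - θ : ℝ) : ℂ) * Complex.I
        = m * θ * Complex.I + (-m : ℤ) * (2 * π * Complex.I) := by
      push_cast; ring
    rw [hg, hexp, Complex.exp_add, Complex.exp_int_mul_two_pi_mul_I, mul_one]
  rw [circleCoeff, intervalIntegral.integral_zero_two_mul_eq_integral_add_comp_sub_left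
    (hint.mul_continuousOn hcont.continuousOn)]
  simp only [hreflect, ← mul_add]
  have hcos (θ : ℝ) : Complex.exp (-(m * θ) * Complex.I) + Complex.exp (m * θ * Complex.I)
      = 2 * Complex.cos (m * θ) := by
    rw [Complex.cos]; ring_nf
  simp only [hcos, mul_left_comm _ (2 : ℂ), intervalIntegral.integral_const_mul]
  field_simp

lemma Real.sin_mul_sqrt_one_add_cos_div_one_sub_cos {θ : ℝ} (h₀ : 0 < θ) (hπ : θ ≤ π) :
    Real.sin θ * √((1 + Real.cos θ) / (1 - Real.cos θ)) = 1 + Real.cos θ := by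
  have hsub : 0 < 1 - Real.cos θ := by
    have := Real.cos_lt_cos_of_nonneg_of_le_pi le_rfl hπ h₀
    rw [Real.cos_zero] at this; linarith
  have hadd : 0 ≤ 1 + Real.cos θ := by linarith [Real.neg_one_le_cos θ]
  rw [Real.sin_eq_sqrt_one_sub_cos_sq h₀.le hπ, ← Real.sqrt_mul (by nlinarith),
    show (1 - Real.cos θ ^ 2) * ((1 + Real.cos θ) / (1 - Real.cos θ)) = (1 + Real.cos θ) ^ 2 by
      field_simp; ring]
  exact Real.sqrt_sq hadd

lemma integral_neg_one_one_eq_integral_sin_smul_comp_cos {E : Type*} [NormedAddCommGroup E]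
    [NormedSpace ℝ E] (G : ℝ → E) :
    ∫ x in (-1 : ℝ)..1, G x = ∫ θ in (0 : ℝ)..π, Real.sin θ • G (Real.cos θ) := by
  have himage : Real.cos '' Set.Icc 0 π = Set.Icc (-1) 1 :=
    Real.surjOn_cos.image_eq_of_mapsTo (Real.mapsTo_cos _)
  have hcv := integral_image_eq_integral_abs_deriv_smul measurableSet_Icc
    (fun θ _ => (Real.hasDerivAt_cos θ).hasDerivWithinAt) Real.injOn_cos G
  rw [himage] at hcv
  rw [intervalIntegral.integral_of_le (by norm_num), ← integral_Icc_eq_integral_Ioc, hcv,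
    intervalIntegral.integral_of_le Real.pi_pos.le, ← integral_Icc_eq_integral_Ioc]
  refine setIntegral_congr_fun measurableSet_Icc fun θ hθ => ?_
  rw [abs_neg, abs_of_nonneg (Real.sin_nonneg_of_nonneg_of_le_pi hθ.1 hθ.2)]

noncomputable def momentMatrix (w : ℝ → ℂ) (n : ℕ) : Matrix (Fin n) (Fin n) ℂ :=
  Matrix.of fun j k => ∫ x in (-1 : ℝ)..1, (x : ℂ) ^ ((j : ℕ) + (k : ℕ)) * w x

lemma hankelDet_eq_det_momentMatrix (w : ℝ → ℂ) (n : ℕ) :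
    hankelDet w n = (momentMatrix w n).det := rfl

lemma integral_eval_mul_eval_mul_eq_sum_momentMatrix {w : ℝ → ℂ} {n : ℕ}
    (hw : ∀ m : ℕ, IntervalIntegrable (fun x : ℝ => (x : ℂ) ^ m * w x) volume (-1) 1)
    {p q : ℂ[X]} (hp : p.natDegree < n) (hq : q.natDegree < n) :
    ∫ x in (-1 : ℝ)..1, p.eval (x : ℂ) * q.eval (x : ℂ) * w x
      = ∑ m : Fin n, ∑ l : Fin n, p.coeff m * q.coeff l * momentMatrix w n m l := by
  have hexpand (x : ℝ) : p.eval (x : ℂ) * q.eval (x : ℂ) * w x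
      = ∑ m : Fin n, ∑ l : Fin n, p.coeff m * q.coeff l * ((x : ℂ) ^ ((m : ℕ) + l) * w x) := by
    rw [eval_eq_sum_range' hp, eval_eq_sum_range' hq, Finset.sum_range, Finset.sum_range,
      Finset.sum_mul_sum, Finset.sum_mul]
    refine Finset.sum_congr rfl fun m _ => ?_
    rw [Finset.sum_mul]
    refine Finset.sum_congr rfl fun l _ => ?_
    ring
  simp only [hexpand, momentMatrix, Matrix.of_apply]
  rw [intervalIntegral.integral_finsetSum fun m _ => by
    simpa only [Finset.sum_fn] using IntervalIntegrable.sum Finset.univ fun (l : Fin n) _ =>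
      (hw ((m : ℕ) + l)).const_mul (p.coeff m * q.coeff l)]
  refine Finset.sum_congr rfl fun m _ => ?_
  rw [intervalIntegral.integral_finsetSum fun l _ => (hw _).const_mul _]
  exact Finset.sum_congr rfl fun l _ => intervalIntegral.integral_const_mul _ _

lemma gram_eq_coeff_mul_momentMatrix_mul_transpose {w : ℝ → ℂ} {n : ℕ}
    (hw : ∀ m : ℕ, IntervalIntegrable (fun x : ℝ => (x : ℂ) ^ m * w x) volume (-1) 1)
    (P : Fin n → ℂ[X]) (hP : ∀ i, (P i).natDegree < n) :
    Matrix.of (fun i j => ∫ x in (-1 : ℝ)..1, (P i).eval (x : ℂ) * (P j).eval (x : ℂ) * w x)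
      = Matrix.of (fun i m : Fin n => (P i).coeff m) * momentMatrix w n
          * (Matrix.of (fun i m : Fin n => (P i).coeff m))ᵀ := by
  ext i j
  rw [Matrix.of_apply, integral_eval_mul_eval_mul_eq_sum_momentMatrix hw (hP i) (hP j),
    Matrix.mul_apply, Finset.sum_comm]
  simp only [Matrix.mul_apply, Finset.sum_mul, Matrix.transpose_apply, Matrix.of_apply]
  exact Finset.sum_congr rfl fun m _ => Finset.sum_congr rfl fun l _ => by ring

lemma circleCoeff_sub_add_circleCoeff_add_eq_integral {g : ℝ → ℂ}
    (hint : IntervalIntegrable g volume 0 (2 * π)) (heven : ∀ θ, g (-θ) = g θ)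
    (hper : Function.Periodic g (2 * π)) (j k : ℕ) :
    circleCoeff g ((j : ℤ) - (k : ℤ)) + circleCoeff g ((j : ℤ) + (k : ℤ) + 1)
      = 1 / π * ∫ x in (-1 : ℝ)..1, (chebyshevV ℂ j).eval (x : ℂ) * (chebyshevV ℂ k).eval (x : ℂ)
          * (g (Real.arccos x) * (√((1 + x) / (1 - x)) : ℂ)) := by
  have hint₀ : IntervalIntegrable g volume 0 π :=
    hint.mono_set (Set.uIcc_subset_uIcc Set.left_mem_uIcc
      (Set.mem_uIcc.2 (Or.inl ⟨Real.pi_pos.le, by linarith [Real.pi_pos]⟩)))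
  have hcos (m : ℤ) : IntervalIntegrable (fun θ : ℝ => g θ * Complex.cos (m * θ)) volume 0 π :=
    hint₀.mul_continuousOn (by fun_prop)
  rw [circleCoeff_eq_integral_cos hint heven hper, circleCoeff_eq_integral_cos hint heven hper,
    ← mul_add, ← intervalIntegral.integral_add (hcos _) (hcos _),
    integral_neg_one_one_eq_integral_sin_smul_comp_cos]
  congr 1
  refine intervalIntegral.integral_congr_ae (Filter.Eventually.of_forall fun θ hθ => ?_)
  rw [Set.uIoc_of_le Real.pi_pos.le] at hθ
  have hweight := congrArg ((↑) : ℝ → ℂ)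
    (Real.sin_mul_sqrt_one_add_cos_div_one_sub_cos hθ.1 hθ.2)
  simp only [Complex.ofReal_mul, Complex.ofReal_add, Complex.ofReal_one, Complex.ofReal_cos]
    at hweight
  rw [Real.arccos_cos hθ.1.le hθ.2, Complex.real_smul, ← mul_add,
    cos_sub_add_cos_add_eq_chebyshevV, Complex.ofReal_cos]
  linear_combination -(g θ * (chebyshevV ℂ j).eval (Complex.cos θ)
    * (chebyshevV ℂ k).eval (Complex.cos θ)) * hweight

lemma sq_prod_fin_two_pow {K : Type*} [Field K] [NeZero (2 : K)] (n : ℕ) :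
    (∏ i : Fin n, (2 : K) ^ (i : ℕ)) ^ 2 = 2 ^ ((n : ℤ) ^ 2 - n) := by
  induction n with
  | zero => simp
  | succ n ih =>
    simp only [Fin.prod_univ_castSucc, Fin.val_castSucc, Fin.val_last, mul_pow]
    rw [ih, ← pow_mul, ← zpow_natCast, ← zpow_add₀ two_ne_zero]
    congr 1
    push_cast; ring

/-- Toeplitz+Hankel identity:
`det(f_{j-k} + f_{j+k+1}) = (2^{n²-n}/πⁿ) D_n^H(f(e^{iθ(x)})√((1+x)/(1-x)))`. -/
theorem toeplitz_plus_hankel_type3 (g : ℝ → ℂ)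
    (hint : IntervalIntegrable g MeasureTheory.volume 0 (2 * π))
    (heven : ∀ θ, g (-θ) = g θ) (hper : Function.Periodic g (2 * π))
    (hmom : ∀ m : ℕ, IntervalIntegrable
      (fun x : ℝ => (x : ℂ)^m * (g (Real.arccos x) * (Real.sqrt ((1 + x) / (1 - x)) : ℂ)))
      MeasureTheory.volume (-1) 1)
    (n : ℕ) :
    Matrix.det (Matrix.of fun j k : Fin n =>
        circleCoeff g ((j : ℤ) - (k : ℤ)) + circleCoeff g ((j : ℤ) + (k : ℤ) + 1))
      = ((2 : ℂ)^((n : ℤ)^2 - (n : ℤ)) / (π : ℂ)^n) *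
          hankelDet (fun x => g (Real.arccos x) * (Real.sqrt ((1 + x) / (1 - x)) : ℂ)) n := by
  set w : ℝ → ℂ := fun x => g (Real.arccos x) * (Real.sqrt ((1 + x) / (1 - x)) : ℂ)
  set V : Matrix (Fin n) (Fin n) ℂ := Matrix.of fun i m => (chebyshevV ℂ i).coeff m
  have hgram : (Matrix.of fun j k : Fin n =>
      circleCoeff g ((j : ℤ) - (k : ℤ)) + circleCoeff g ((j : ℤ) + (k : ℤ) + 1))
        = (1 / π : ℂ) • (V * momentMatrix w n * Vᵀ) := by
    rw [← gram_eq_coeff_mul_momentMatrix_mul_transpose hmom _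
      fun i => (chebyshevV_natDegree_le ℂ i).trans_lt i.isLt]
    ext j k
    simp only [Matrix.of_apply, Matrix.smul_apply, smul_eq_mul,
      circleCoeff_sub_add_circleCoeff_add_eq_integral hint heven hper]
  rw [hgram, Matrix.det_smul, Matrix.det_mul, Matrix.det_mul, Matrix.det_transpose,
    det_chebyshevV_coeff, hankelDet_eq_det_momentMatrix, ← sq_prod_fin_two_pow, Fintype.card_fin]
  ring
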